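/- Let Θ be a space of input histories over (E, I) satisfying the free-choice condition, with output sets O. (i) For every causal function f ∈ CausFun(Θ,O), the restriction of Ext(f) to the total functions in ∏_{ω∈E} I_ω is a joint input-output function which is causal for Θ. (ii) Conversely, every joint input-output function F which is causal for Θ arises in this way: the assignment f(h)(ω) := F(k)(ω), for any total k with h ≤ k and any ω ∈ tips_Θ(h), is well-defined, yields a causal function f ∈ CausFun(Θ,O), and the restriction of Ext(f) to the total functions equals F. -/

import Mathlib

namespace Caus

/-- Partial functions over events `E` with value family `V`:
each event is assigned an optional value. -/
abbrev PF (E : Type) (V : E → Type) : Type := ∀ ω : E, Option (V ω)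

variable {E : Type} {I O : E → Type}

/-- The total function `k` viewed as a partial function with full domain. -/
def toPF (k : ∀ ω : E, I ω) : PF E I := fun ω => some (k ω)

/-- Domain of a partial function. -/
def dom (h : PF E I) : Set E := {ω | (h ω).isSome}

/-- The order on partial functions: `h' ≤ h` iff `dom h' ⊆ dom h` and they agree on `dom h'`. -/
def le (h' h : PF E I) : Prop := ∀ ω : E, (h' ω).isSome → h' ω = h ω

/-- Compatibility: agreeing on the intersection of the domains. -/
def Compat (h h' : PF E I) : Prop :=
  ∀ ω : E, (h ω).isSome → (h' ω).isSome → h ω = h' ω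

/-- Join of two partial functions (union, when they are compatible). -/
def join (h h' : PF E I) : PF E I := fun ω => (h ω).orElse fun _ => h' ω

/-- `k` is the join (union) of the set `S` of partial functions. -/
def IsJoinOf (k : PF E I) (S : Set (PF E I)) : Prop :=
  ∀ (ω : E) (x : I ω), k ω = some x ↔ ∃ h ∈ S, h ω = some x

/-- `Ext Θ`: joins of nonempty pairwise-compatible subsets of `Θ`. -/
def Ext (Θ : Set (PF E I)) : Set (PF E I) :=
  {k | ∃ S ⊆ Θ, S.Nonempty ∧ S.Pairwise Compat ∧ IsJoinOf k S}

/-- A space of input histories: every `h ∈ Θ` is ∨-prime in `Ext Θ`. -/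
def IsSpace (Θ : Set (PF E I)) : Prop :=
  ∀ h ∈ Θ, ∀ k ∈ Ext Θ, ∀ k' ∈ Ext Θ, Compat k k' →
    le h (join k k') → le h k ∨ le h k'

/-- Tip events of `h` in `Θ`. -/
def tips (Θ : Set (PF E I)) (h : PF E I) : Set E :=
  {ω | ω ∈ dom h ∧ ∀ h' ∈ Θ, le h' h → h' ≠ h → ω ∉ dom h'}

/-- Extended functions: the output partial function has the same domain as the input. -/
def IsExtFun (Θ : Set (PF E I)) (F : PF E I → PF E O) : Prop :=
  ∀ k ∈ Ext Θ, dom (F k) = dom k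

/-- The consistency condition for extended functions. -/
def Consistent (Θ : Set (PF E I)) (F : PF E I → PF E O) : Prop :=
  ∀ k ∈ Ext Θ, ∀ k' ∈ Ext Θ, le k' k → le (F k') (F k)

/-- `h` and `h'` are constrained at `ω`: both have tip `ω` and every consistent
extended function with binary outputs takes the same value at `ω` on them. -/
def Constr (Θ : Set (PF E I)) (ω : E) (h h' : PF E I) : Prop :=
  h ∈ Θ ∧ h' ∈ Θ ∧ ω ∈ tips Θ h ∧ ω ∈ tips Θ h' ∧
  ∀ F : PF E I → PF E (fun _ => Bool),
    IsExtFun Θ F → Consistent Θ F → F h ω = F h' ω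

/-- Causal function conditions: `f h` is an assignment of outputs to the tips of `h`,
with equal outputs on histories constrained at an event. -/
def IsCausFun (Θ : Set (PF E I)) (f : PF E I → PF E O) : Prop :=
  (∀ h ∈ Θ, dom (f h) = tips Θ h) ∧
  ∀ (ω : E) (h h' : PF E I), Constr Θ ω h h' → f h ω = f h' ω

/-- Causal functions for `Θ` with outputs `W` (normalized to `none` outside `Θ`). -/
def CausFunSet (Θ : Set (PF E I)) (W : E → Type) : Set (PF E I → PF E W) :=
  {f | IsCausFun Θ f ∧ ∀ h ∉ Θ, ∀ ω : E, f h ω = none}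

open Classical in
/-- The extended causal function `Ext f` of a causal function `f`. -/
noncomputable def extCF (Θ : Set (PF E I)) (f : PF E I → PF E O) : PF E I → PF E O :=
  fun k ω =>
    if hh : ∃ h, h ∈ Θ ∧ le h k ∧ ω ∈ tips Θ h then f hh.choose ω else none

open Classical in
/-- `Prime F̂`: the causal function underlying a consistent extended function. -/
noncomputable def primeCF (Θ : Set (PF E I)) (F : PF E I → PF E O) : PF E I → PF E O :=
  fun h ω => if h ∈ Θ ∧ ω ∈ tips Θ h then F h ω else none

open Classical in
/-- Restriction of a causal function to a lowerset (normalized outside it). -/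
noncomputable def restrictCF (lam : Set (PF E I)) (f : PF E I → PF E O) :
    PF E I → PF E O :=
  fun h => if h ∈ lam then f h else fun _ => none

/-- The free-choice condition. -/
def FreeChoice (Θ : Set (PF E I)) : Prop := ∀ k : ∀ ω : E, I ω, toPF k ∈ Ext Θ

/-- Tightness. -/
def Tight (Θ : Set (PF E I)) : Prop :=
  ∀ k ∈ Ext Θ, ∀ ω ∈ dom k, ∃! h, h ∈ Θ ∧ le h k ∧ ω ∈ tips Θ h

/-- Maximal extended input histories. -/
def maxExt (Θ : Set (PF E I)) : Set (PF E I) :=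
  {k | k ∈ Ext Θ ∧ ∀ k' ∈ Ext Θ, le k k' → k' = k}

/-- Lowersets (downward-closed subsets) of a space `Θ`. -/
def IsLowersetOf (Θ lam : Set (PF E I)) : Prop :=
  lam ⊆ Θ ∧ ∀ h ∈ lam, ∀ h' ∈ Θ, le h' h → h' ∈ lam


/-- A joint input-output function `F` is causal for `Θ`. -/
def JointCausal (Θ : Set (PF E I)) (F : (∀ ω : E, I ω) → (∀ ω : E, O ω)) : Prop :=
  ∀ h ∈ Θ, ∀ ω ∈ tips Θ h, ∀ k k' : ∀ ω : E, I ω,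
    le h (toPF k) → le h (toPF k') → F k ω = F k' ω

/-! Since `E` is finite, every event `ω` in the domain of some `k ∈ Ext Θ` is a tip of a history
`h ≤ k`: shrink the domain until `ω` becomes a tip. Two histories with tip `ω` below a common `k`
are compatible, hence constrained at `ω`, since both lie below their join, which is in `Ext Θ`.
So `Ext f` is defined everywhere on total inputs, and its value at `ω` only depends on a tip
history below the input.

Conversely, a causal joint function `F` yields the consistent extended function
`k ↦ F(any total completion of k)|_{dom k}`, and its restriction to tips is the causal function
`f`: histories constrained at `ω` agree under any consistent extended function, as one sees by
testing with the Boolean indicator of one output value at `ω`. -/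

section Order

theorem le.refl (h : PF E I) : le h h := fun _ _ => rfl

theorem le.trans {h₁ h₂ h₃ : PF E I} (h₁₂ : le h₁ h₂) (h₂₃ : le h₂ h₃) : le h₁ h₃ := by
  intro ω hω
  rw [h₁₂ ω hω, h₂₃ ω (h₁₂ ω hω ▸ hω)]

theorem le.dom_subset {h k : PF E I} (hle : le h k) : dom h ⊆ dom k :=
  fun ω hω => show (k ω).isSome from hle ω hω ▸ hω

theorem le.eq_of_dom_subset {h k : PF E I} (hle : le h k) (hdom : dom k ⊆ dom h) : h = k := by
  funext ω
  cases hk : k ω with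
  | none =>
    cases hh : h ω with
    | none => rfl
    | some x => simpa [hh, hk] using hle ω (by simp [hh])
  | some x => rw [← hk]; exact hle ω (hdom (by simp [dom, hk]))

theorem ncard_dom_lt_of_le_of_ne [Finite E] {h k : PF E I} (hle : le h k) (hne : h ≠ k) :
    (dom h).ncard < (dom k).ncard :=
  Set.ncard_lt_ncard ⟨hle.dom_subset, fun hdom => hne (hle.eq_of_dom_subset hdom)⟩

theorem Compat.symm {h h' : PF E I} (hc : Compat h h') : Compat h' h :=
  fun ω hω hω' => (hc ω hω' hω).symm

theorem compat_of_le_of_le {h₁ h₂ k : PF E I} (h₁k : le h₁ k) (h₂k : le h₂ k) :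
    Compat h₁ h₂ :=
  fun ω hω₁ hω₂ => by rw [h₁k ω hω₁, h₂k ω hω₂]

theorem le_join_left (h₁ h₂ : PF E I) : le h₁ (join h₁ h₂) := by
  intro ω hω
  obtain ⟨x, hx⟩ := Option.isSome_iff_exists.mp hω
  simp [join, hx]

theorem le_join_right {h₁ h₂ : PF E I} (hc : Compat h₁ h₂) : le h₂ (join h₁ h₂) := by
  intro ω hω
  cases h₁ω : h₁ ω with
  | none => simp [join, h₁ω]
  | some x => simp [join, h₁ω, ← hc ω (by simp [h₁ω]) hω]

theorem join_eq_some_iff {h₁ h₂ : PF E I} (hc : Compat h₁ h₂) (ω : E) (x : I ω) :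
    join h₁ h₂ ω = some x ↔ h₁ ω = some x ∨ h₂ ω = some x := by
  cases h₁ω : h₁ ω with
  | none => simp [join, h₁ω]
  | some y =>
    cases h₂ω : h₂ ω with
    | none => simp [join, h₁ω]
    | some z =>
      have hyz : y = z := by simpa [h₁ω, h₂ω] using hc ω (by simp [h₁ω]) (by simp [h₂ω])
      simp [join, h₁ω, hyz]

end Order

section Ext

variable {Θ : Set (PF E I)}

theorem mem_Ext_of_mem {h : PF E I} (hh : h ∈ Θ) : h ∈ Ext Θ :=
  ⟨{h}, by simpa using hh, Set.singleton_nonempty h, Set.pairwise_singleton _ _,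
    fun ω x => by simp⟩

theorem join_mem_Ext {h₁ h₂ : PF E I} (hh₁ : h₁ ∈ Θ) (hh₂ : h₂ ∈ Θ) (hc : Compat h₁ h₂) :
    join h₁ h₂ ∈ Ext Θ := by
  refine ⟨{h₁, h₂}, Set.insert_subset hh₁ (Set.singleton_subset_iff.mpr hh₂),
    Set.insert_nonempty _ _, ?_, fun ω x => ?_⟩
  · exact Set.pairwise_pair.mpr fun _ => ⟨hc, hc.symm⟩
  · simp [join_eq_some_iff hc]

theorem exists_mem_le_of_mem_dom {k : PF E I} (hk : k ∈ Ext Θ) {ω : E} (hω : ω ∈ dom k) :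
    ∃ h ∈ Θ, le h k ∧ ω ∈ dom h := by
  obtain ⟨S, hSΘ, -, -, hjoin⟩ := hk
  obtain ⟨x, hx⟩ := Option.isSome_iff_exists.mp hω
  obtain ⟨h, hS, hhω⟩ := (hjoin ω x).mp hx
  refine ⟨h, hSΘ hS, fun ω' hω' => ?_, by simp [dom, hhω]⟩
  obtain ⟨y, hy⟩ := Option.isSome_iff_exists.mp hω'
  rw [hy, (hjoin ω' y).mpr ⟨h, hS, hy⟩]

/-- A history of minimal domain among those below `h` containing `ω` has `ω` as a tip. -/
theorem exists_tip_le_of_mem_dom [Finite E] {h : PF E I} (hh : h ∈ Θ) {ω : E}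
    (hω : ω ∈ dom h) : ∃ h' ∈ Θ, le h' h ∧ ω ∈ tips Θ h' := by
  obtain ⟨h', ⟨hh', h'h, hω'⟩, hmin⟩ := (measure fun h' : PF E I => (dom h').ncard).wf.has_min
    {h' | h' ∈ Θ ∧ le h' h ∧ ω ∈ dom h'} ⟨h, hh, le.refl h, hω⟩
  refine ⟨h', hh', h'h, hω', fun g hg gh' hne hωg => ?_⟩
  exact hmin g ⟨hg, gh'.trans h'h, hωg⟩ (ncard_dom_lt_of_le_of_ne gh' hne)

theorem exists_tip_le [Finite E] {k : PF E I} (hk : k ∈ Ext Θ) {ω : E} (hω : ω ∈ dom k) :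
    ∃ h ∈ Θ, le h k ∧ ω ∈ tips Θ h := by
  obtain ⟨h, hh, hk, hωh⟩ := exists_mem_le_of_mem_dom hk hω
  obtain ⟨h', hh', h'h, hω'⟩ := exists_tip_le_of_mem_dom hh hωh
  exact ⟨h', hh', h'h.trans hk, hω'⟩

end Ext

section Constrained

variable {Θ : Set (PF E I)}

theorem IsExtFun.isSome_iff {G : PF E I → PF E O} (hG : IsExtFun Θ G) {k : PF E I}
    (hk : k ∈ Ext Θ) (ω : E) : (G k ω).isSome ↔ (k ω).isSome :=
  Set.ext_iff.mp (hG k hk) ω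

theorem constr_of_compat {h₁ h₂ : PF E I} {ω : E} (hh₁ : h₁ ∈ Θ) (hh₂ : h₂ ∈ Θ)
    (hω₁ : ω ∈ tips Θ h₁) (hω₂ : ω ∈ tips Θ h₂) (hc : Compat h₁ h₂) : Constr Θ ω h₁ h₂ := by
  refine ⟨hh₁, hh₂, hω₁, hω₂, fun G hG hGc => ?_⟩
  have hj := join_mem_Ext hh₁ hh₂ hc
  have hG₁ := (hG.isSome_iff (mem_Ext_of_mem hh₁) ω).mpr hω₁.1
  have hG₂ := (hG.isSome_iff (mem_Ext_of_mem hh₂) ω).mpr hω₂.1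
  rw [hGc _ hj _ (mem_Ext_of_mem hh₁) (le_join_left h₁ h₂) ω hG₁,
    hGc _ hj _ (mem_Ext_of_mem hh₂) (le_join_right hc) ω hG₂]

theorem IsExtFun.map {O' : E → Type} {G : PF E I → PF E O} (hG : IsExtFun Θ G)
    (p : ∀ ω, O ω → O' ω) : IsExtFun Θ fun k ω => (G k ω).map (p ω) := by
  intro k hk
  ext ω
  simpa [dom] using hG.isSome_iff hk ω

theorem Consistent.map {O' : E → Type} {G : PF E I → PF E O} (hG : Consistent Θ G)
    (p : ∀ ω, O ω → O' ω) : Consistent Θ fun k ω => (G k ω).map (p ω) := by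
  intro k hk k' hk' hle ω hω
  simp only [Option.isSome_map] at hω
  simp only [hG k hk k' hk' hle ω hω]

/-- Compose `G` with the Boolean indicator of the value it takes on `h` at `ω`. -/
theorem Constr.apply_eq {h h' : PF E I} {ω : E} (hC : Constr Θ ω h h') {G : PF E I → PF E O}
    (hG : IsExtFun Θ G) (hGc : Consistent Θ G) : G h ω = G h' ω := by
  classical
  obtain ⟨hh, hh', hω, hω', hBool⟩ := hC
  obtain ⟨a, ha⟩ := Option.isSome_iff_exists.mp ((hG.isSome_iff (mem_Ext_of_mem hh) ω).mpr hω.1)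
  obtain ⟨b, hb⟩ :=
    Option.isSome_iff_exists.mp ((hG.isSome_iff (mem_Ext_of_mem hh') ω).mpr hω'.1)
  let p : ∀ ω', O ω' → Bool := Function.update (fun _ _ => true) ω fun x => decide (x = a)
  have hp := hBool _ (hG.map p) (hGc.map p)
  simp only [ha, hb, Option.map_some, Option.some.injEq, p, Function.update_self] at hp
  simp [ha, hb, of_decide_eq_true hp.symm]

theorem primeCF_mem_CausFunSet {G : PF E I → PF E O} (hG : IsExtFun Θ G)
    (hGc : Consistent Θ G) : primeCF Θ G ∈ CausFunSet Θ O := by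
  refine ⟨⟨fun h hh => ?_, fun ω h h' hC => ?_⟩, fun h hh ω => by simp [primeCF, hh]⟩
  · ext ω
    by_cases hω : ω ∈ tips Θ h
    · simpa [dom, primeCF, hh, hω] using (hG.isSome_iff (mem_Ext_of_mem hh) ω).mpr hω.1
    · simp [dom, primeCF, hω]
  · obtain ⟨hh, hh', hω, hω', -⟩ := id hC
    simp [primeCF, hh, hh', hω, hω', hC.apply_eq hG hGc]

end Constrained

section CausalFunctions

variable {Θ : Set (PF E I)} {f : PF E I → PF E O}

theorem IsCausFun.extCF_eq (hf : IsCausFun Θ f) {h k : PF E I} (hh : h ∈ Θ) (hk : le h k)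
    {ω : E} (hω : ω ∈ tips Θ h) : extCF Θ f k ω = f h ω := by
  have hex : ∃ h, h ∈ Θ ∧ le h k ∧ ω ∈ tips Θ h := ⟨h, hh, hk, hω⟩
  obtain ⟨hh₀, hk₀, hω₀⟩ := hex.choose_spec
  rw [extCF, dif_pos hex]
  exact hf.2 ω _ h (constr_of_compat hh₀ hh hω₀ hω (compat_of_le_of_le hk₀ hk))

theorem IsCausFun.exists_extCF_eq_some [Finite E] (hf : IsCausFun Θ f) {k : PF E I}
    (hk : k ∈ Ext Θ) {ω : E} (hω : ω ∈ dom k) : ∃ y, extCF Θ f k ω = some y := by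
  obtain ⟨h, hh, hhk, hωh⟩ := exists_tip_le hk hω
  rw [hf.extCF_eq hh hhk hωh]
  exact Option.isSome_iff_exists.mp (hf.1 h hh ▸ hωh : ω ∈ dom (f h))

end CausalFunctions

section JointFunctions

variable [∀ ω, Nonempty (I ω)]

noncomputable def toTotal (h : PF E I) : ∀ ω : E, I ω :=
  fun ω => (h ω).getD (Classical.arbitrary _)

theorem le.le_toPF_toTotal {h k : PF E I} (hle : le h k) : le h (toPF (toTotal k)) := by
  intro ω hω
  obtain ⟨x, hx⟩ := Option.isSome_iff_exists.mp hω
  simp [toPF, toTotal, hx, ← hle ω hω]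

noncomputable def extOfJoint (F : (∀ ω : E, I ω) → (∀ ω : E, O ω)) : PF E I → PF E O :=
  fun k ω => (k ω).map fun _ => F (toTotal k) ω

variable {Θ : Set (PF E I)} {F : (∀ ω : E, I ω) → (∀ ω : E, O ω)}

theorem isExtFun_extOfJoint : IsExtFun Θ (extOfJoint F) := by
  intro k _
  ext ω
  simp [dom, extOfJoint]

theorem JointCausal.consistent_extOfJoint [Finite E] (hF : JointCausal Θ F) :
    Consistent Θ (extOfJoint F) := by
  intro k hk k' hk' hle ω hω
  have hω' : (k' ω).isSome := by simpa [extOfJoint] using hω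
  obtain ⟨h, hh, hhk', hωh⟩ := exists_tip_le hk' hω'
  simp only [extOfJoint, hle ω hω',
    hF h hh ω hωh _ _ hhk'.le_toPF_toTotal (hhk'.trans hle).le_toPF_toTotal]

theorem JointCausal.primeCF_extOfJoint_eq (hF : JointCausal Θ F) {h : PF E I} (hh : h ∈ Θ)
    {ω : E} (hω : ω ∈ tips Θ h) {k : ∀ ω : E, I ω} (hk : le h (toPF k)) :
    primeCF Θ (extOfJoint F) h ω = some (F k ω) := by
  obtain ⟨x, hx⟩ := Option.isSome_iff_exists.mp hω.1
  simp [primeCF, extOfJoint, hh, hω, hx, hF h hh ω hω _ k (le.refl h).le_toPF_toTotal hk]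

end JointFunctions

theorem stmt3_general {E : Type} [Fintype E] {I O : E → Type}
    [∀ ω, Nonempty (I ω)]
    (Θ : Set (PF E I)) (hFC : FreeChoice Θ) :
    (∀ f ∈ CausFunSet Θ O,
      ∃ F : (∀ ω : E, I ω) → (∀ ω : E, O ω),
        (∀ (k : ∀ ω : E, I ω) (ω : E), extCF Θ f (toPF k) ω = some (F k ω)) ∧
        JointCausal Θ F) ∧
    (∀ F : (∀ ω : E, I ω) → (∀ ω : E, O ω), JointCausal Θ F →
      ∃ f ∈ CausFunSet Θ O,
        (∀ h ∈ Θ, ∀ ω ∈ tips Θ h, ∀ k : ∀ ω : E, I ω,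
          le h (toPF k) → f h ω = some (F k ω)) ∧
        (∀ (k : ∀ ω : E, I ω) (ω : E), extCF Θ f (toPF k) ω = some (F k ω))) := by
  have mem_dom_toPF (k : ∀ ω : E, I ω) (ω : E) : ω ∈ dom (toPF k) := rfl
  refine ⟨fun f ⟨hf, _⟩ => ?_, fun F hF => ?_⟩
  · choose F hF using fun k ω => hf.exists_extCF_eq_some (hFC k) (mem_dom_toPF k ω)
    refine ⟨F, hF, fun h hh ω hω k k' hk hk' => Option.some.inj ?_⟩
    rw [← hF, ← hF, hf.extCF_eq hh hk hω, hf.extCF_eq hh hk' hω]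
  · have hf := primeCF_mem_CausFunSet isExtFun_extOfJoint hF.consistent_extOfJoint
    refine ⟨primeCF Θ (extOfJoint F), hf, fun h hh ω hω k hk => hF.primeCF_extOfJoint_eq hh hω hk,
      fun k ω => ?_⟩
    obtain ⟨h, hh, hk, hω⟩ := exists_tip_le (hFC k) (mem_dom_toPF k ω)
    rw [hf.1.extCF_eq hh hk hω, hF.primeCF_extOfJoint_eq hh hω hk]

/-- for a space satisfying the free-choice condition,
(i) the restriction of `Ext f` to total joint inputs is a joint IO function causal for `Θ`;
(ii) conversely every joint IO function causal for `Θ` arises this way, via the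
well-defined assignment `f(h)(ω) := F(k)(ω)` for any total `k ≥ h` and `ω ∈ tips Θ h`. -/
theorem stmt3 {E : Type} [Fintype E] {I O : E → Type}
    [∀ ω, Nonempty (I ω)] [∀ ω, Nonempty (O ω)]
    (Θ : Set (PF E I)) (hS : IsSpace Θ) (hFC : FreeChoice Θ) :
    (∀ f ∈ CausFunSet Θ O,
      ∃ F : (∀ ω : E, I ω) → (∀ ω : E, O ω),
        (∀ (k : ∀ ω : E, I ω) (ω : E), extCF Θ f (toPF k) ω = some (F k ω)) ∧
        JointCausal Θ F) ∧
    (∀ F : (∀ ω : E, I ω) → (∀ ω : E, O ω), JointCausal Θ F →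
      ∃ f ∈ CausFunSet Θ O,
        (∀ h ∈ Θ, ∀ ω ∈ tips Θ h, ∀ k : ∀ ω : E, I ω,
          le h (toPF k) → f h ω = some (F k ω)) ∧
        (∀ (k : ∀ ω : E, I ω) (ω : E), extCF Θ f (toPF k) ω = some (F k ω))) :=
  stmt3_general Θ hFC

end Caus
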